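/- Let m be a 4×4×4 complex tensor and x ∈ ℂ⁴ a nonzero vector with det(T₀(x)) = 0. Let y ∈ ℂ⁴ be a column of the adjugate matrix adj(T₀(x)) (equivalently, a vector of signed 3×3 cofactors of T₀(x) along a row, as in Cayley's use of Laplace's rule). Then T₀(x)·y = 0, and if y ≠ 0 then det(T₂(y)) = 0. -/
import Mathlib


open Matrix BigOperators

/-- If `x ≠ 0` and `det (T₀ x) = 0`, and `y` is a column of the
adjugate of `T₀ x`, then `T₀(x)·y = 0`, and if `y ≠ 0` then `det (T₂ y) = 0`. -/
theorem cayley_adjugate_column_in_kernel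
    (m : Fin 4 → Fin 4 → Fin 4 → ℂ) (x : Fin 4 → ℂ) (hx : x ≠ 0)
    (hdet : (Matrix.of fun (j k : Fin 4) => ∑ i : Fin 4, x i * m i j k).det = 0)
    (c : Fin 4) (y : Fin 4 → ℂ)
    (hy : y = fun j : Fin 4 =>
      (Matrix.of fun (j k : Fin 4) => ∑ i : Fin 4, x i * m i j k).adjugate j c) :
    (Matrix.of fun (j k : Fin 4) => ∑ i : Fin 4, x i * m i j k).mulVec y = 0 ∧
    (y ≠ 0 → (Matrix.of fun (i j : Fin 4) => ∑ k : Fin 4, y k * m i j k).det = 0) := by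
  set M : Matrix (Fin 4) (Fin 4) ℂ :=
    Matrix.of fun (j k : Fin 4) => ∑ i : Fin 4, x i * m i j k with hM
  have h1 : M.mulVec y = 0 := by
    funext i
    have : (M * M.adjugate) i c = 0 := by
      rw [Matrix.mul_adjugate, hdet]; simp
    simpa [hy, Matrix.mulVec, Matrix.mul_apply, dotProduct] using this
  refine ⟨h1, fun _ => ?_⟩
  set N : Matrix (Fin 4) (Fin 4) ℂ :=
    Matrix.of fun (i j : Fin 4) => ∑ k : Fin 4, y k * m i j k with hN
  have hkey : Matrix.vecMul x N = 0 := by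
    funext j
    have := congrFun h1 j
    simp only [Matrix.mulVec, Matrix.vecMul, dotProduct, hM, hN, Matrix.of_apply,
      Pi.zero_apply, Finset.sum_mul, Finset.mul_sum] at this ⊢
    rw [Finset.sum_comm]
    rw [← this]
    apply Finset.sum_congr rfl; intro k _
    apply Finset.sum_congr rfl; intro i _
    ring
  by_contra hd
  exact hx (Matrix.eq_zero_of_vecMul_eq_zero hd hkey)
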